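/- arXiv:1305.4662 — 5 statements merged into one kernel-verified Lean document; each statement's English description precedes it below -/
import Mathlib

section
/- In a projective space P of dimension at least 3 with horizon W satisfying the size condition, if three proper lines k₁, k₂, k₃ form a triangle with at least one improper vertex, then there exists a proper line intersecting k₁, k₂, k₃ in three pairwise distinct proper points. -/
/-- A projective space of dimension at least 3, given by its point set `S` and its
set of lines: any two points lie on a unique line, the Veblen (Pasch) axiom holds,
and there exist two disjoint lines (dimension ≥ 3). -/
structure ProjSpace (S : Type*) where
  L : Set (Set S)
  two_points : ∀ k ∈ L, ∃ a ∈ k, ∃ b ∈ k, a ≠ b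
  unique_meet : ∀ k ∈ L, ∀ l ∈ L, k ≠ l → (k ∩ l).Subsingleton
  join : ∀ a b : S, a ≠ b → ∃ k ∈ L, a ∈ k ∧ b ∈ k
  veblen : ∀ l₁ ∈ L, ∀ l₂ ∈ L, ∀ l₃ ∈ L, ∀ l₄ ∈ L, ∀ p a b c d : S,
    l₁ ≠ l₂ → p ≠ a → p ≠ b → p ≠ c → p ≠ d →
    p ∈ l₁ → a ∈ l₁ → c ∈ l₁ → p ∈ l₂ → b ∈ l₂ → d ∈ l₂ →
    a ∈ l₃ → b ∈ l₃ → c ∈ l₄ → d ∈ l₄ → (l₃ ∩ l₄).Nonempty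
  dim3 : ∃ k ∈ L, ∃ l ∈ L, k ∩ l = ∅

namespace ProjSpace

variable {S : Type*}

/-- A subspace: any line through two of its points is contained in it. -/
def IsSubspace (P : ProjSpace S) (X : Set S) : Prop :=
  ∀ k ∈ P.L, ∀ a ∈ k, ∀ b ∈ k, a ≠ b → a ∈ X → b ∈ X → k ⊆ X

/-- The subspace spanned by a point set. -/
def span (P : ProjSpace S) (X : Set S) : Set S :=
  ⋂₀ {Y | P.IsSubspace Y ∧ X ⊆ Y}

/-- A plane: the span of a line together with a point outside it. -/
def IsPlane (P : ProjSpace S) (Pl : Set S) : Prop :=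
  ∃ k ∈ P.L, ∃ a, a ∉ k ∧ Pl = P.span (insert a k)

/-- `HasIndex P W lam`: some line has exactly `lam` points in `W` and every line not
contained in `W` has at most `lam` points in `W`. -/
def HasIndex (P : ProjSpace S) (W : Set S) (lam : ℕ) : Prop :=
  (∃ k ∈ P.L, (k ∩ W).encard = (lam : ℕ∞)) ∧
    ∀ k ∈ P.L, ¬ k ⊆ W → (k ∩ W).encard ≤ (lam : ℕ∞)

/-- Three lines form a triangle: pairwise distinct, pairwise intersecting,
not concurrent. -/
def LineTriangle (P : ProjSpace S) (k₁ k₂ k₃ : Set S) : Prop :=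
  k₁ ∈ P.L ∧ k₂ ∈ P.L ∧ k₃ ∈ P.L ∧ k₁ ≠ k₂ ∧ k₁ ≠ k₃ ∧ k₂ ≠ k₃ ∧
    (k₁ ∩ k₂).Nonempty ∧ (k₁ ∩ k₃).Nonempty ∧ (k₂ ∩ k₃).Nonempty ∧
    ¬ (k₁ ∩ k₂ ∩ k₃).Nonempty

/-- Parallelism w.r.t. the horizon `W`: the lines meet, and only inside `W`. -/
def Par (W : Set S) (k₁ k₂ : Set S) : Prop :=
  (k₁ ∩ k₂).Nonempty ∧ k₁ ∩ k₂ ⊆ W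

end ProjSpace

/-!
Put the improper vertex at `a = k₁ ∩ k₂` and fix a proper point `p₁ ∈ k₁` off `k₃`. By Veblen's
axiom every line through `p₁` and a point `p₂ ∈ k₂` meets `k₃`, and the perspectivity
`p₂ ↦ p₁p₂ ∩ k₃` with centre `p₁` is injective. Since `a ∈ W`, the proper points of `k₂` other
than `c = k₂ ∩ k₃` number at least `λ + 1` (each line has at least `2λ + 2` points, at most `λ`
of them in `W`), while `k₃` has at most `λ` improper points. So some proper `p₂` is sent to a
proper point of `k₃`, and the line `p₁p₂` is the required transversal.
-/

theorem Set.add_two_le_encard_sdiff {α : Type*} {k W : Set α} {n : ℕ}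
    (hW : (k ∩ W).encard ≤ n) (hk : 2 * (n : ℕ∞) + 2 ≤ k.encard) :
    (n : ℕ∞) + 2 ≤ (k \ W).encard := by
  rw [← ENat.add_le_add_iff_right (ENat.natCast_ne_top n)]
  calc (n : ℕ∞) + 2 + n = 2 * n + 2 := by ring
    _ ≤ k.encard := hk
    _ = (k \ W).encard + (k ∩ W).encard := (Set.encard_sdiff_add_encard_inter k W).symm
    _ ≤ (k \ W).encard + n := by gcongr

namespace ProjSpace

variable {S : Type*} (P : ProjSpace S)

theorem eq_of_mem_of_mem {k l : Set S} (hk : k ∈ P.L) (hl : l ∈ P.L) (hkl : k ≠ l) {x y : S}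
    (hxk : x ∈ k) (hxl : x ∈ l) (hyk : y ∈ k) (hyl : y ∈ l) : x = y :=
  P.unique_meet k hk l hl hkl ⟨hxk, hxl⟩ ⟨hyk, hyl⟩

theorem line_eq_of_mem_of_mem {k l : Set S} (hk : k ∈ P.L) (hl : l ∈ P.L) {x y : S}
    (hxy : x ≠ y) (hxk : x ∈ k) (hxl : x ∈ l) (hyk : y ∈ k) (hyl : y ∈ l) : k = l :=
  by_contra fun hkl => hxy (P.eq_of_mem_of_mem hk hl hkl hxk hxl hyk hyl)

/-- Injectivity of the perspectivity with centre `p` from a line `k` not through `p`. -/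
theorem eq_of_perspective {k l l' : Set S} (hk : k ∈ P.L) (hl : l ∈ P.L) (hl' : l' ∈ P.L)
    {p q x y : S} (hpk : p ∉ k) (hpq : p ≠ q) (hpl : p ∈ l) (hql : q ∈ l) (hxl : x ∈ l)
    (hpl' : p ∈ l') (hql' : q ∈ l') (hyl' : y ∈ l') (hxk : x ∈ k) (hyk : y ∈ k) : x = y := by
  obtain rfl : l = l' := P.line_eq_of_mem_of_mem hl hl' hpq hpl hpl' hql hql'
  exact P.eq_of_mem_of_mem hl hk (fun h => hpk (h ▸ hpl)) hxl hxk hyl' hyk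

theorem exists_line_meeting_of_triangle {k₁ k₂ k₃ : Set S} (htri : LineTriangle P k₁ k₂ k₃)
    {a b c : S} (ha₁ : a ∈ k₁) (ha₂ : a ∈ k₂) (hb₁ : b ∈ k₁) (hb₃ : b ∈ k₃) (hc₂ : c ∈ k₂)
    (hc₃ : c ∈ k₃) {p₁ p₂ : S} (hp₁ : p₁ ∈ k₁) (hp₂ : p₂ ∈ k₂) (hp₁a : p₁ ≠ a) (hp₂a : p₂ ≠ a)
    (hp₁₂ : p₁ ≠ p₂) : ∃ l ∈ P.L, ∃ q ∈ k₃, p₁ ∈ l ∧ p₂ ∈ l ∧ q ∈ l := by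
  obtain ⟨hk₁, hk₂, hk₃, h₁₂, -, -, -, -, -, hncon⟩ := htri
  have ha₃ : a ∉ k₃ := fun h => hncon ⟨a, ⟨ha₁, ha₂⟩, h⟩
  obtain ⟨l, hl, hp₁l, hp₂l⟩ := P.join p₁ p₂ hp₁₂
  obtain ⟨q, hql, hqk₃⟩ := P.veblen k₁ hk₁ k₂ hk₂ l hl k₃ hk₃ a p₁ p₂ b c h₁₂ hp₁a.symm hp₂a.symm
    (fun h => ha₃ (h ▸ hb₃)) (fun h => ha₃ (h ▸ hc₃)) ha₁ hp₁ hb₁ ha₂ hp₂ hc₂ hp₁l hp₂l hb₃ hc₃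
  exact ⟨l, hl, q, hqk₃, hp₁l, hp₂l, hql⟩

variable {P}

theorem LineTriangle.swap₁₂ {k₁ k₂ k₃ : Set S} (h : LineTriangle P k₁ k₂ k₃) :
    LineTriangle P k₂ k₁ k₃ := by
  obtain ⟨h₁, h₂, h₃, h₁₂, h₁₃, h₂₃, m₁₂, m₁₃, m₂₃, hn⟩ := h
  refine ⟨h₂, h₁, h₃, h₁₂.symm, h₂₃, h₁₃, ?_, m₂₃, m₁₃, ?_⟩
  · rwa [Set.inter_comm]
  · rwa [Set.inter_comm k₂]

theorem LineTriangle.swap₂₃ {k₁ k₂ k₃ : Set S} (h : LineTriangle P k₁ k₂ k₃) :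
    LineTriangle P k₁ k₃ k₂ := by
  obtain ⟨h₁, h₂, h₃, h₁₂, h₁₃, h₂₃, m₁₂, m₁₃, m₂₃, hn⟩ := h
  refine ⟨h₁, h₃, h₂, h₁₃, h₁₂, h₂₃.symm, m₁₃, m₁₂, ?_, ?_⟩
  · rwa [Set.inter_comm]
  · rwa [Set.inter_right_comm]

def HasProperTransversal (P : ProjSpace S) (W k₁ k₂ k₃ : Set S) : Prop :=
  ∃ l ∈ P.L, ¬ l ⊆ W ∧ ∃ c₁ c₂ c₃ : S,
    c₁ ∉ W ∧ c₂ ∉ W ∧ c₃ ∉ W ∧ c₁ ≠ c₂ ∧ c₁ ≠ c₃ ∧ c₂ ≠ c₃ ∧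
    c₁ ∈ l ∩ k₁ ∧ c₂ ∈ l ∩ k₂ ∧ c₃ ∈ l ∩ k₃

theorem HasProperTransversal.swap₁₂ {W k₁ k₂ k₃ : Set S}
    (h : P.HasProperTransversal W k₁ k₂ k₃) : P.HasProperTransversal W k₂ k₁ k₃ := by
  obtain ⟨l, hl, hlW, c₁, c₂, c₃, h₁, h₂, h₃, h₁₂, h₁₃, h₂₃, m₁, m₂, m₃⟩ := h
  exact ⟨l, hl, hlW, c₂, c₁, c₃, h₂, h₁, h₃, h₁₂.symm, h₂₃, h₁₃, m₂, m₁, m₃⟩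

theorem HasProperTransversal.swap₂₃ {W k₁ k₂ k₃ : Set S}
    (h : P.HasProperTransversal W k₁ k₂ k₃) : P.HasProperTransversal W k₁ k₃ k₂ := by
  obtain ⟨l, hl, hlW, c₁, c₂, c₃, h₁, h₂, h₃, h₁₂, h₁₃, h₂₃, m₁, m₂, m₃⟩ := h
  exact ⟨l, hl, hlW, c₁, c₃, c₂, h₁, h₃, h₂, h₁₃, h₁₂, h₂₃.symm, m₁, m₃, m₂⟩

variable {W : Set S} {lam : ℕ}

theorem hasProperTransversal_of_vertex_mem {k₁ k₂ k₃ : Set S}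
    (hind : ∀ k ∈ P.L, ¬ k ⊆ W → (k ∩ W).encard ≤ lam)
    (hsize : ∀ k ∈ P.L, 2 * (lam : ℕ∞) + 2 ≤ k.encard) (htri : LineTriangle P k₁ k₂ k₃)
    (hp₁ : ¬ k₁ ⊆ W) (hp₂ : ¬ k₂ ⊆ W) (hp₃ : ¬ k₃ ⊆ W) {a : S} (ha₁ : a ∈ k₁) (ha₂ : a ∈ k₂)
    (haW : a ∈ W) : P.HasProperTransversal W k₁ k₂ k₃ := by
  have hproper : ∀ k ∈ P.L, ¬ k ⊆ W → (lam : ℕ∞) + 2 ≤ (k \ W).encard := fun k hk hkW =>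
    Set.add_two_le_encard_sdiff (hind k hk hkW) (hsize k hk)
  obtain ⟨hk₁, hk₂, hk₃, h₁₂, h₁₃, h₂₃, -, ⟨b, hb₁, hb₃⟩, ⟨c, hc₂, hc₃⟩, -⟩ := id htri
  obtain ⟨p₁, ⟨hp₁k₁, hp₁W⟩, hp₁b⟩ := Set.exists_ne_of_one_lt_encard
    (lt_of_lt_of_le (by norm_cast; omega) (hproper k₁ hk₁ hp₁)) b
  have hp₁k₂ : p₁ ∉ k₂ := fun h => hp₁W (P.eq_of_mem_of_mem hk₁ hk₂ h₁₂ hp₁k₁ h ha₁ ha₂ ▸ haW)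
  have hp₁k₃ : p₁ ∉ k₃ := fun h => hp₁b (P.eq_of_mem_of_mem hk₁ hk₃ h₁₃ hp₁k₁ h hb₁ hb₃)
  set C := (k₂ \ W) \ {c}
  have hproj : ∀ p₂ ∈ C, ∃ l ∈ P.L, ∃ q ∈ k₃, p₁ ∈ l ∧ p₂ ∈ l ∧ q ∈ l :=
    fun p₂ ⟨⟨hp₂k₂, hp₂W⟩, _⟩ => P.exists_line_meeting_of_triangle htri ha₁ ha₂ hb₁ hb₃ hc₂ hc₃
      hp₁k₁ hp₂k₂ (fun h => hp₁W (h ▸ haW)) (fun h => hp₂W (h ▸ haW))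
      (fun h => hp₁k₂ (h ▸ hp₂k₂))
  choose! l hl q hq hp₁l hp₂l hql using hproj
  have hinj : Set.InjOn q C := fun x hx y hy hxy =>
    P.eq_of_perspective hk₂ (hl x hx) (hl y hy) hp₁k₂ (fun h => hp₁k₃ (h ▸ hq x hx)) (hp₁l x hx)
      (hql x hx) (hp₂l x hx) (hp₁l y hy) (hxy ▸ hql y hy) (hp₂l y hy) hx.1.1 hy.1.1
  -- `a ∉ C` because `a ∈ W`: this is what makes `C` outnumber the improper points of `k₃`
  obtain ⟨p₂, hp₂C, hqW⟩ : ∃ p₂ ∈ C, q p₂ ∉ W := by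
    by_contra! hall
    have : (lam : ℕ∞) + 2 ≤ lam + 1 := calc
      (lam : ℕ∞) + 2 ≤ (k₂ \ W).encard := hproper k₂ hk₂ hp₂
      _ ≤ C.encard + 1 := by simpa using Set.encard_le_encard_sdiff_add_encard (k₂ \ W) {c}
      _ ≤ (k₃ ∩ W).encard + 1 := by
        gcongr ?_ + 1
        exact Set.encard_le_encard_of_injOn (fun x hx => ⟨hq x hx, hall x hx⟩) hinj
      _ ≤ lam + 1 := by gcongr; exact hind k₃ hk₃ hp₃
    norm_cast at this
    omega
  have ⟨⟨hp₂k₂, hp₂W⟩, hp₂c⟩ := hp₂C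
  refine ⟨l p₂, hl p₂ hp₂C, fun h => hp₁W (h (hp₁l p₂ hp₂C)), p₁, p₂, q p₂, hp₁W, hp₂W, hqW,
    fun h => hp₁k₂ (h ▸ hp₂k₂), fun h => hp₁k₃ (h ▸ hq p₂ hp₂C), fun h => hp₂c ?_,
    ⟨hp₁l p₂ hp₂C, hp₁k₁⟩, ⟨hp₂l p₂ hp₂C, hp₂k₂⟩, ⟨hql p₂ hp₂C, hq p₂ hp₂C⟩⟩
  exact P.eq_of_mem_of_mem hk₂ hk₃ h₂₃ hp₂k₂ (h ▸ hq p₂ hp₂C) hc₂ hc₃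

end ProjSpace

open ProjSpace in
theorem veblen_for_complement_general {S : Type*} (P : ProjSpace S) (W : Set S) (lam : ℕ)
    (hind : P.HasIndex W lam)
    (hsize : ∀ k ∈ P.L, 2 * (lam : ℕ∞) + 2 ≤ k.encard)
    (k₁ k₂ k₃ : Set S) (htri : LineTriangle P k₁ k₂ k₃)
    (hp₁ : ¬ k₁ ⊆ W) (hp₂ : ¬ k₂ ⊆ W) (hp₃ : ¬ k₃ ⊆ W)
    (himp : ∃ x ∈ W, x ∈ k₁ ∩ k₂ ∨ x ∈ k₁ ∩ k₃ ∨ x ∈ k₂ ∩ k₃) :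
    ∃ l ∈ P.L, ¬ l ⊆ W ∧ ∃ c₁ c₂ c₃ : S,
      c₁ ∉ W ∧ c₂ ∉ W ∧ c₃ ∉ W ∧ c₁ ≠ c₂ ∧ c₁ ≠ c₃ ∧ c₂ ≠ c₃ ∧
      c₁ ∈ l ∩ k₁ ∧ c₂ ∈ l ∩ k₂ ∧ c₃ ∈ l ∩ k₃ := by
  obtain ⟨x, hxW, ⟨hx₁, hx₂⟩ | ⟨hx₁, hx₃⟩ | ⟨hx₂, hx₃⟩⟩ := himp
  · exact hasProperTransversal_of_vertex_mem hind.2 hsize htri hp₁ hp₂ hp₃ hx₁ hx₂ hxW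
  · exact (hasProperTransversal_of_vertex_mem hind.2 hsize htri.swap₂₃ hp₁ hp₃ hp₂
      hx₁ hx₃ hxW).swap₂₃
  · exact (hasProperTransversal_of_vertex_mem hind.2 hsize htri.swap₁₂.swap₂₃ hp₂ hp₃ hp₁
      hx₂ hx₃ hxW).swap₂₃.swap₁₂

open ProjSpace in
/-- a triangle of proper lines with at least one improper vertex admits a
proper line meeting all three sides in pairwise distinct proper points. -/
theorem veblen_for_complement {S : Type*} (P : ProjSpace S) (W : Set S) (lam : ℕ)
    (hlam : 0 < lam) (hind : P.HasIndex W lam)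
    (hsize : ∀ k ∈ P.L, 2 * (lam : ℕ∞) + 2 ≤ k.encard)
    (k₁ k₂ k₃ : Set S) (htri : LineTriangle P k₁ k₂ k₃)
    (hp₁ : ¬ k₁ ⊆ W) (hp₂ : ¬ k₂ ⊆ W) (hp₃ : ¬ k₃ ⊆ W)
    (himp : ∃ x ∈ W, x ∈ k₁ ∩ k₂ ∨ x ∈ k₁ ∩ k₃ ∨ x ∈ k₂ ∩ k₃) :
    ∃ l ∈ P.L, ¬ l ⊆ W ∧ ∃ c₁ c₂ c₃ : S,
      c₁ ∉ W ∧ c₂ ∉ W ∧ c₃ ∉ W ∧ c₁ ≠ c₂ ∧ c₁ ≠ c₃ ∧ c₂ ≠ c₃ ∧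
      c₁ ∈ l ∩ k₁ ∧ c₂ ∈ l ∩ k₂ ∧ c₃ ∈ l ∩ k₃ :=
  veblen_for_complement_general P W lam hind hsize k₁ k₂ k₃ htri hp₁ hp₂ hp₃ himp
end

section
/- Define parallelism on lines of a projective space P with horizon W by: k₁ ∥ k₂ iff k₁ ∩ k₂ is nonempty and contained in W. Then for distinct proper lines k₁, k₂: k₁ ∥ k₂ if and only if (there exist a proper line k₃ forming a triangle with k₁, k₂, and a proper line l meeting k₁, k₂, k₃ in proper points c₁, c₂, c₃) and no proper point lies on both k₁ and k₂. -/
theorem Set.le_encard_diff_of_encard_inter_le {α : Type*} {s t : Set α} {n : ℕ} {m : ℕ∞}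
    (hinter : (s ∩ t).encard ≤ n) (hs : n + m ≤ s.encard) : m ≤ (s \ t).encard := by
  refine (ENat.add_le_add_iff_left (ENat.natCast_ne_top n)).mp ?_
  calc (n : ℕ∞) + m ≤ s.encard := hs
    _ = (s \ t).encard + (s ∩ t).encard := (Set.encard_sdiff_add_encard_inter s t).symm
    _ ≤ (s \ t).encard + n := add_le_add_right hinter _
    _ = n + (s \ t).encard := add_comm _ _

namespace ProjSpace

variable {S : Type*} (P : ProjSpace S)

theorem eq_of_mem_of_mem_s4 {k l : Set S} (hk : k ∈ P.L) (hl : l ∈ P.L) {a b : S} (hab : a ≠ b)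
    (hak : a ∈ k) (hbk : b ∈ k) (hal : a ∈ l) (hbl : b ∈ l) : k = l := by
  by_contra h
  exact hab (P.unique_meet k hk l hl h ⟨hak, hal⟩ ⟨hbk, hbl⟩)

/-- `f` is a central projection from `b` onto `l`. -/
theorem injOn_of_mem_join {l m X : Set S} {b : S} {f : S → S} (hm : m ∈ P.L) (hXm : X ⊆ m)
    (hbl : b ∉ l) (hbm : b ∉ m)
    (hf : ∀ x ∈ X, f x ∈ l ∧ ∃ k ∈ P.L, b ∈ k ∧ x ∈ k ∧ f x ∈ k) : Set.InjOn f X := by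
  intro x hx y hy hxy
  obtain ⟨hfx, kx, hkx, hbx, hxkx, hfxkx⟩ := hf x hx
  obtain ⟨-, ky, hky, hby, hyky, hfyky⟩ := hf y hy
  have hfxb : f x ≠ b := fun h => hbl (h ▸ hfx)
  have hkxy : kx = ky := P.eq_of_mem_of_mem_s4 hkx hky hfxb hfxkx hbx (hxy ▸ hfyky) hby
  by_contra hne
  have hkxm : kx = m := P.eq_of_mem_of_mem_s4 hkx hm hne hxkx (hkxy ▸ hyky) (hXm hx) (hXm hy)
  exact hbm (hkxm ▸ hbx)

theorem exists_join_meeting_off {W k₁ k₂ l : Set S} {p a₁ a₂ b₁ : S}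
    (hk₁ : k₁ ∈ P.L) (hk₂ : k₂ ∈ P.L) (hl : l ∈ P.L) (hne : k₁ ≠ k₂)
    (hp₁ : p ∈ k₁) (hp₂ : p ∈ k₂) (hpW : p ∈ W)
    (ha₁ : a₁ ∈ k₁ \ W) (ha₂ : a₂ ∈ k₂ \ W) (hb₁ : b₁ ∈ k₁ \ W)
    (ha₁l : a₁ ∈ l) (ha₂l : a₂ ∈ l) (hb₁l : b₁ ∉ l)
    (hcard : (l ∩ W).encard < (k₂ \ W).encard) :
    ∃ b₂ ∈ k₂ \ W, ∃ k₃ ∈ P.L, b₁ ∈ k₃ ∧ b₂ ∈ k₃ ∧ ∃ c ∈ l ∩ k₃, c ∉ W := by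
  have hp_ne : ∀ {x}, x ∉ W → p ≠ x := fun hx h => hx (h ▸ hpW)
  have hb₁k₂ : b₁ ∉ k₂ := fun h =>
    hp_ne hb₁.2 (P.unique_meet k₁ hk₁ k₂ hk₂ hne ⟨hp₁, hp₂⟩ ⟨hb₁.1, h⟩)
  by_contra! hall
  have hproj : ∀ b₂ ∈ k₂ \ W, ∃ c, c ∈ l ∩ W ∧ ∃ k₃ ∈ P.L, b₁ ∈ k₃ ∧ b₂ ∈ k₃ ∧ c ∈ k₃ := by
    intro b₂ hb₂
    obtain ⟨k₃, hk₃, hb₁k₃, hb₂k₃⟩ := P.join b₁ b₂ (by rintro rfl; exact hb₁k₂ hb₂.1)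
    obtain ⟨c, hcl, hck₃⟩ := P.veblen k₁ hk₁ k₂ hk₂ l hl k₃ hk₃ p a₁ a₂ b₁ b₂ hne
      (hp_ne ha₁.2) (hp_ne ha₂.2) (hp_ne hb₁.2) (hp_ne hb₂.2) hp₁ ha₁.1 hb₁.1 hp₂ ha₂.1 hb₂.1
      ha₁l ha₂l hb₁k₃ hb₂k₃
    exact ⟨c, ⟨hcl, hall b₂ hb₂ k₃ hk₃ hb₁k₃ hb₂k₃ c ⟨hcl, hck₃⟩⟩, k₃, hk₃, hb₁k₃, hb₂k₃, hck₃⟩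
  choose! f hfW hf using hproj
  have hinj : Set.InjOn f (k₂ \ W) :=
    P.injOn_of_mem_join hk₂ Set.sdiff_subset hb₁l hb₁k₂ fun x hx => ⟨(hfW x hx).1, hf x hx⟩
  refine hcard.not_ge ?_
  rw [← hinj.encard_image]
  exact Set.encard_le_encard (Set.image_subset_iff.mpr hfW)

theorem lineTriangle_of_par {W k₁ k₂ k₃ : Set S} {b₁ b₂ : S}
    (hk₁ : k₁ ∈ P.L) (hk₂ : k₂ ∈ P.L) (hk₃ : k₃ ∈ P.L) (hne : k₁ ≠ k₂) (hpar : Par W k₁ k₂)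
    (hb₁ : b₁ ∈ k₁ \ W) (hb₂ : b₂ ∈ k₂ \ W) (hb₁k₃ : b₁ ∈ k₃) (hb₂k₃ : b₂ ∈ k₃) :
    LineTriangle P k₁ k₂ k₃ := by
  have hk₁₃ : k₁ ≠ k₃ := by
    rintro rfl
    exact hb₂.2 (hpar.2 ⟨hb₂k₃, hb₂.1⟩)
  have hk₂₃ : k₂ ≠ k₃ := by
    rintro rfl
    exact hb₁.2 (hpar.2 ⟨hb₁.1, hb₁k₃⟩)
  refine ⟨hk₁, hk₂, hk₃, hne, hk₁₃, hk₂₃, hpar.1, ⟨b₁, hb₁.1, hb₁k₃⟩, ⟨b₂, hb₂.1, hb₂k₃⟩, ?_⟩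
  rintro ⟨x, hx₁₂, hx₃⟩
  have hxb₁ : x = b₁ := P.unique_meet k₁ hk₁ k₃ hk₃ hk₁₃ ⟨hx₁₂.1, hx₃⟩ ⟨hb₁.1, hb₁k₃⟩
  exact hb₁.2 (hxb₁ ▸ hpar.2 hx₁₂)

theorem exists_transversal_of_par {W k₁ k₂ : Set S} {lam : ℕ}
    (hind : ∀ k ∈ P.L, ¬ k ⊆ W → (k ∩ W).encard ≤ lam)
    (hsize : ∀ k ∈ P.L, 2 * (lam : ℕ∞) + 2 ≤ k.encard)
    (hk₁ : k₁ ∈ P.L) (hk₂ : k₂ ∈ P.L) (hp₁ : ¬ k₁ ⊆ W) (hp₂ : ¬ k₂ ⊆ W) (hne : k₁ ≠ k₂)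
    (hpar : Par W k₁ k₂) :
    ∃ k₃ ∈ P.L, ∃ l ∈ P.L, ¬ k₃ ⊆ W ∧ ¬ l ⊆ W ∧ LineTriangle P k₁ k₂ k₃ ∧
      ∃ c₁ c₂ c₃ : S, c₁ ∉ W ∧ c₂ ∉ W ∧ c₃ ∉ W ∧
        c₁ ∈ l ∩ k₁ ∧ c₂ ∈ l ∩ k₂ ∧ c₃ ∈ l ∩ k₃ := by
  have hproper : ∀ k ∈ P.L, ¬ k ⊆ W → (lam : ℕ∞) + 2 ≤ (k \ W).encard := fun k hk hp =>
    Set.le_encard_diff_of_encard_inter_le (hind k hk hp)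
      (by rw [← add_assoc, ← two_mul]; exact hsize k hk)
  have htwo : ∀ k ∈ P.L, ¬ k ⊆ W → 1 < (k \ W).encard := fun k hk hp =>
    lt_of_lt_of_le (by exact_mod_cast (show 1 < lam + 2 by omega)) (hproper k hk hp)
  obtain ⟨p, hp⟩ := hpar.1
  obtain ⟨a₁, b₁, ha₁, hb₁, hab₁⟩ := Set.one_lt_encard_iff.mp (htwo k₁ hk₁ hp₁)
  obtain ⟨a₂, -, ha₂, -, -⟩ := Set.one_lt_encard_iff.mp (htwo k₂ hk₂ hp₂)
  obtain ⟨l, hl, ha₁l, ha₂l⟩ :=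
    P.join a₁ a₂ (by rintro rfl; exact ha₁.2 (hpar.2 ⟨ha₁.1, ha₂.1⟩))
  have hlW : ¬ l ⊆ W := fun h => ha₁.2 (h ha₁l)
  have hb₁l : b₁ ∉ l := fun h =>
    ha₂.2 (hpar.2 ⟨P.eq_of_mem_of_mem_s4 hl hk₁ hab₁ ha₁l h ha₁.1 hb₁.1 ▸ ha₂l, ha₂.1⟩)
  have hcard : (l ∩ W).encard < (k₂ \ W).encard :=
    calc (l ∩ W).encard ≤ lam := hind l hl hlW
      _ < lam + 2 := by exact_mod_cast (show lam < lam + 2 by omega)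
      _ ≤ (k₂ \ W).encard := hproper k₂ hk₂ hp₂
  obtain ⟨b₂, hb₂, k₃, hk₃, hb₁k₃, hb₂k₃, c₃, hc₃, hc₃W⟩ :=
    P.exists_join_meeting_off hk₁ hk₂ hl hne hp.1 hp.2 (hpar.2 hp) ha₁ ha₂ hb₁ ha₁l ha₂l hb₁l hcard
  exact ⟨k₃, hk₃, l, hl, fun h => hb₁.2 (h hb₁k₃), hlW,
    P.lineTriangle_of_par hk₁ hk₂ hk₃ hne hpar hb₁ hb₂ hb₁k₃ hb₂k₃,
    a₁, a₂, c₃, ha₁.2, ha₂.2, hc₃W, ⟨ha₁l, ha₁.1⟩, ⟨ha₂l, ha₂.1⟩, hc₃⟩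

end ProjSpace

open ProjSpace in
theorem parallel_internal_characterization_general {S : Type*} (P : ProjSpace S) (W : Set S)
    (lam : ℕ) (hind : P.HasIndex W lam)
    (hsize : ∀ k ∈ P.L, 2 * (lam : ℕ∞) + 2 ≤ k.encard)
    (k₁ k₂ : Set S) (hk₁ : k₁ ∈ P.L) (hk₂ : k₂ ∈ P.L)
    (hp₁ : ¬ k₁ ⊆ W) (hp₂ : ¬ k₂ ⊆ W) (hne : k₁ ≠ k₂) :
    Par W k₁ k₂ ↔
      ((∃ k₃ ∈ P.L, ∃ l ∈ P.L, ¬ k₃ ⊆ W ∧ ¬ l ⊆ W ∧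
          LineTriangle P k₁ k₂ k₃ ∧
          ∃ c₁ c₂ c₃ : S, c₁ ∉ W ∧ c₂ ∉ W ∧ c₃ ∉ W ∧
            c₁ ∈ l ∩ k₁ ∧ c₂ ∈ l ∩ k₂ ∧ c₃ ∈ l ∩ k₃) ∧
        ¬ ∃ x : S, x ∉ W ∧ x ∈ k₁ ∩ k₂) := by
  refine ⟨fun hpar => ⟨P.exists_transversal_of_par hind.2 hsize hk₁ hk₂ hp₁ hp₂ hne hpar,
    fun ⟨x, hxW, hx⟩ => hxW (hpar.2 hx)⟩, ?_⟩
  · rintro ⟨⟨k₃, -, l, -, -, -, htri, -⟩, hproper⟩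
    exact ⟨htri.2.2.2.2.2.2.1, fun x hx => by_contra fun hxW => hproper ⟨x, hxW, hx⟩⟩

open ProjSpace in
/-- internal characterization of parallelism: for distinct proper lines
`k₁, k₂`, `k₁ ∥ k₂` iff there are a proper line `k₃` forming a triangle with `k₁, k₂`
and a proper line `l` meeting `k₁, k₂, k₃` in proper points, while no proper point
lies on both `k₁` and `k₂`. -/
theorem parallel_internal_characterization {S : Type*} (P : ProjSpace S) (W : Set S)
    (lam : ℕ) (hlam : 0 < lam) (hind : P.HasIndex W lam)
    (hsize : ∀ k ∈ P.L, 2 * (lam : ℕ∞) + 2 ≤ k.encard)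
    (k₁ k₂ : Set S) (hk₁ : k₁ ∈ P.L) (hk₂ : k₂ ∈ P.L)
    (hp₁ : ¬ k₁ ⊆ W) (hp₂ : ¬ k₂ ⊆ W) (hne : k₁ ≠ k₂) :
    Par W k₁ k₂ ↔
      ((∃ k₃ ∈ P.L, ∃ l ∈ P.L, ¬ k₃ ⊆ W ∧ ¬ l ⊆ W ∧
          LineTriangle P k₁ k₂ k₃ ∧
          ∃ c₁ c₂ c₃ : S, c₁ ∉ W ∧ c₂ ∉ W ∧ c₃ ∉ W ∧
            c₁ ∈ l ∩ k₁ ∧ c₂ ∈ l ∩ k₂ ∧ c₃ ∈ l ∩ k₃) ∧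
        ¬ ∃ x : S, x ∉ W ∧ x ∈ k₁ ∩ k₂) :=
  parallel_internal_characterization_general P W lam hind hsize k₁ k₂ hk₁ hk₂ hp₁ hp₂ hne
end

section
/- Through every point of P (proper or improper) there are at least three pairwise distinct, non-coplanar proper lines. -/
namespace ProjSpace

variable {S : Type*}

/-- The cone over a line `m` with vertex `x`: all points on lines through `x` meeting `m`. -/
def Cone (P : ProjSpace S) (x : S) (m : Set S) : Set S :=
  {y | ∃ l ∈ P.L, x ∈ l ∧ (l ∩ m).Nonempty ∧ y ∈ l}

/-- Two distinct points lie on at most one line. -/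
lemma line_unique {P : ProjSpace S} {k l : Set S} (hk : k ∈ P.L) (hl : l ∈ P.L)
    {a b : S} (hab : a ≠ b) (hak : a ∈ k) (hbk : b ∈ k) (hal : a ∈ l) (hbl : b ∈ l) :
    k = l := by
  by_contra h
  exact hab (P.unique_meet k hk l hl h ⟨hak, hal⟩ ⟨hbk, hbl⟩)

/-- Every line contains a point different from any given point. -/
lemma exists_mem_ne {P : ProjSpace S} {k : Set S} (hk : k ∈ P.L) (a : S) :
    ∃ b ∈ k, b ≠ a := by
  obtain ⟨p, hp, q, hq, hpq⟩ := P.two_points k hk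
  rcases eq_or_ne p a with rfl | h
  · exact ⟨q, hq, hpq.symm⟩
  · exact ⟨p, hp, h⟩

lemma mem_cone_of_mem {P : ProjSpace S} {x : S} {m : Set S} (hm : m ∈ P.L) (hxm : x ∉ m)
    {z : S} (hz : z ∈ m) : z ∈ P.Cone x m := by
  have hxz : x ≠ z := fun h => hxm (h ▸ hz)
  obtain ⟨l, hl, hxl, hzl⟩ := P.join x z hxz
  exact ⟨l, hl, hxl, ⟨z, hzl, hz⟩, hzl⟩

lemma vertex_mem_cone {P : ProjSpace S} {x : S} {m : Set S} (hm : m ∈ P.L) (hxm : x ∉ m) :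
    x ∈ P.Cone x m := by
  obtain ⟨q, hq, _⟩ := P.two_points m hm
  have hxq : x ≠ q := fun h => hxm (h ▸ hq)
  obtain ⟨l, hl, hxl, hql⟩ := P.join x q hxq
  exact ⟨l, hl, hxl, ⟨q, hql, hq⟩, hxl⟩

/-- Every line contained in a cone meets the base line. -/
lemma cone_line_meets {P : ProjSpace S} {x : S} {m : Set S} (hm : m ∈ P.L) (hxm : x ∉ m)
    {l : Set S} (hl : l ∈ P.L) (hsub : l ⊆ P.Cone x m) : (l ∩ m).Nonempty := by
  obtain ⟨p, hp, p', hp', hpp'⟩ := P.two_points l hl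
  by_cases hxl : x ∈ l
  · -- pick a point of l different from x
    have : ∃ r ∈ l, r ≠ x := by
      rcases eq_or_ne p x with rfl | h
      · exact ⟨p', hp', hpp'.symm⟩
      · exact ⟨p, hp, h⟩
    obtain ⟨r, hr, hrx⟩ := this
    obtain ⟨l₁, hl₁, hxl₁, hmeet, hrl₁⟩ := hsub hr
    have : l = l₁ := line_unique hl hl₁ hrx.symm hxl hr hxl₁ hrl₁
    rwa [this]
  · have hpx : p ≠ x := fun h => hxl (h ▸ hp)
    have hp'x : p' ≠ x := fun h => hxl (h ▸ hp')
    obtain ⟨l₁, hl₁, hxl₁, ⟨q, hql₁, hqm⟩, hpl₁⟩ := hsub hp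
    obtain ⟨l₂, hl₂, hxl₂, ⟨q', hq'l₂, hq'm⟩, hp'l₂⟩ := hsub hp'
    have hl₁l₂ : l₁ ≠ l₂ := by
      rintro rfl
      exact hxl ((line_unique hl₁ hl hpp' hpl₁ hp'l₂ hp hp') ▸ hxl₁)
    have hxq : x ≠ q := fun h => hxm (h ▸ hqm)
    have hxq' : x ≠ q' := fun h => hxm (h ▸ hq'm)
    exact P.veblen l₁ hl₁ l₂ hl₂ l hl m hm x p p' q q' hl₁l₂ hpx.symm hp'x.symm hxq hxq'
      hxl₁ hpl₁ hql₁ hxl₂ hp'l₂ hq'l₂ hp hp' hqm hq'm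

/-- A line in a cone not through the vertex meets every generator. -/
lemma cone_line_meets_generator {P : ProjSpace S} {x : S} {m : Set S}
    (hm : m ∈ P.L) (hxm : x ∉ m)
    {h : Set S} (hh : h ∈ P.L) (hsub : h ⊆ P.Cone x m) (hxh : x ∉ h)
    {v : S} (hvh : v ∈ h) (hvm : v ∈ m) {u : S} (hum : u ∈ m) (huv : u ≠ v)
    {g : Set S} (hg : g ∈ P.L) (hxg : x ∈ g) (hug : u ∈ g) : (h ∩ g).Nonempty := by
  by_cases huh : u ∈ h
  · exact ⟨u, huh, hug⟩
  have hhm : h ≠ m := fun e => huh (e ▸ hum)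
  obtain ⟨p, hph, hpv⟩ := exists_mem_ne hh v
  have hpm : p ∉ m := fun hpm' =>
    hpv (P.unique_meet h hh m hm hhm ⟨hph, hpm'⟩ ⟨hvh, hvm⟩)
  obtain ⟨l₁, hl₁, hxl₁, ⟨q, hql₁, hqm⟩, hpl₁⟩ := hsub hph
  have hpx : p ≠ x := fun e => hxh (e ▸ hph)
  have hxu : x ≠ u := fun e => hxm (e ▸ hum)
  rcases eq_or_ne q u with rfl | hqu
  · have : l₁ = g := line_unique hl₁ hg hxu hxl₁ hql₁ hxg hug
    exact ⟨p, hph, this ▸ hpl₁⟩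
  rcases eq_or_ne q v with rfl | hqv
  · have : h = l₁ := line_unique hh hl₁ hpv hph hvh hpl₁ hql₁
    exact absurd (this ▸ hxl₁) hxh
  have hl₁m : l₁ ≠ m := fun e => hxm (e ▸ hxl₁)
  have hqp : q ≠ p := fun e => hpm (e ▸ hqm)
  have hqx : q ≠ x := fun e => hxm (e ▸ hqm)
  exact P.veblen l₁ hl₁ m hm h hh g hg q p v x u hl₁m hqp hqv hqx hqu
    hql₁ hpl₁ hxl₁ hqm hvm hum hph hvh hxg hug

/-- Any two distinct lines contained in a cone meet. -/
lemma cone_lines_meet {P : ProjSpace S} {x : S} {m : Set S} (hm : m ∈ P.L) (hxm : x ∉ m)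
    {g h : Set S} (hg : g ∈ P.L) (hh : h ∈ P.L)
    (hgC : g ⊆ P.Cone x m) (hhC : h ⊆ P.Cone x m) (hgh : g ≠ h) : (g ∩ h).Nonempty := by
  obtain ⟨u, hug, hum⟩ := cone_line_meets hm hxm hg hgC
  obtain ⟨v, hvh, hvm⟩ := cone_line_meets hm hxm hh hhC
  by_cases huh : u ∈ h
  · exact ⟨u, hug, huh⟩
  by_cases hvg : v ∈ g
  · exact ⟨v, hvg, hvh⟩
  have huv : u ≠ v := fun e => hvg (e ▸ hug)
  by_cases hxg : x ∈ g
  · by_cases hxh : x ∈ h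
    · exact ⟨x, hxg, hxh⟩
    · have := cone_line_meets_generator hm hxm hh hhC hxh hvh hvm hum huv hg hxg hug
      exact this.imp fun z hz => ⟨hz.2, hz.1⟩
  · by_cases hxh : x ∈ h
    · exact cone_line_meets_generator hm hxm hg hgC hxg hug hum hvm huv.symm hh hxh hvh
    · have hxu : x ≠ u := fun e => hxm (e ▸ hum)
      have hxv : x ≠ v := fun e => hxm (e ▸ hvm)
      obtain ⟨lxu, hlxu, hxlxu, hulxu⟩ := P.join x u hxu
      obtain ⟨lxv, hlxv, hxlxv, hvlxv⟩ := P.join x v hxv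
      obtain ⟨w, hwh, hwlxu⟩ :=
        cone_line_meets_generator hm hxm hh hhC hxh hvh hvm hum huv hlxu hxlxu hulxu
      obtain ⟨w', hw'g, hw'lxv⟩ :=
        cone_line_meets_generator hm hxm hg hgC hxg hug hum hvm huv.symm hlxv hxlxv hvlxv
      have hne : lxu ≠ lxv := by
        rintro rfl
        have : lxu = m := line_unique hlxu hm huv hulxu
          (by
            have : v ∈ lxu := hvlxv
            exact this) hum hvm
        exact hxm (this ▸ hxlxu)
      have hxw : x ≠ w := fun e => hxh (e ▸ hwh)
      have hxw' : x ≠ w' := fun e => hxg (e ▸ hw'g)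
      have := P.veblen lxu hlxu lxv hlxv h hh g hg x w v u w' hne hxw hxv hxu hxw'
        hxlxu hwlxu hulxu hxlxv hvlxv hw'lxv hwh hvh hug hw'g
      exact this.imp fun z hz => ⟨hz.2, hz.1⟩

/-- Auxiliary: a secant of the cone avoiding the vertex, with a point off `m`. -/
lemma cone_secant_sub_aux {P : ProjSpace S} {x : S} {m : Set S} (hm : m ∈ P.L) (hxm : x ∉ m)
    {l : Set S} (hl : l ∈ P.L) {p p' : S} (hp : p ∈ l) (hp' : p' ∈ l) (hpp' : p ≠ p')
    (hpC : p ∈ P.Cone x m) (hp'C : p' ∈ P.Cone x m) (hxl : x ∉ l) (hpm : p ∉ m) :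
    l ⊆ P.Cone x m := by
  obtain ⟨l₁, hl₁, hxl₁, ⟨q, hql₁, hqm⟩, hpl₁⟩ := hpC
  obtain ⟨l₂, hl₂, hxl₂, ⟨q', hq'l₂, hq'm⟩, hp'l₂⟩ := hp'C
  have hpx : p ≠ x := fun e => hxl (e ▸ hp)
  have hp'x : p' ≠ x := fun e => hxl (e ▸ hp')
  have hl₁l₂ : l₁ ≠ l₂ := by
    rintro rfl
    exact hxl ((line_unique hl₁ hl hpp' hpl₁ hp'l₂ hp hp') ▸ hxl₁)
  have hxq : x ≠ q := fun e => hxm (e ▸ hqm)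
  have hxq' : x ≠ q' := fun e => hxm (e ▸ hq'm)
  obtain ⟨t, htl, htm⟩ := P.veblen l₁ hl₁ l₂ hl₂ l hl m hm x p p' q q' hl₁l₂
    hpx.symm hp'x.symm hxq hxq' hxl₁ hpl₁ hql₁ hxl₂ hp'l₂ hq'l₂ hp hp' hqm hq'm
  intro z hz
  by_cases hzm : z ∈ m
  · exact mem_cone_of_mem hm hxm hzm
  rcases eq_or_ne z p with rfl | hzp
  · exact ⟨l₁, hl₁, hxl₁, ⟨q, hql₁, hqm⟩, hpl₁⟩
  have hzx : z ≠ x := fun e => hxl (e ▸ hz)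
  have hpt : p ≠ t := fun e => hpm (e ▸ htm)
  have hpq : p ≠ q := fun e => hpm (e ▸ hqm)
  have hll₁ : l ≠ l₁ := fun e => hxl (e ▸ hxl₁)
  obtain ⟨lzx, hlzx, hzlzx, hxlzx⟩ := P.join z x hzx
  have := P.veblen l hl l₁ hl₁ lzx hlzx m hm p z x t q hll₁ hzp.symm hpx hpt hpq
    hp hz htl hpl₁ hxl₁ hql₁ hzlzx hxlzx htm hqm
  exact ⟨lzx, hlzx, hxlzx, this, hzlzx⟩

/-- The cone is a subspace. -/
lemma cone_isSubspace {P : ProjSpace S} {x : S} {m : Set S} (hm : m ∈ P.L) (hxm : x ∉ m) :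
    P.IsSubspace (P.Cone x m) := by
  intro l hl p hp p' hp' hpp' hpC hp'C
  by_cases hxl : x ∈ l
  · -- l is a generator
    have : ∃ r ∈ l, r ≠ x ∧ r ∈ P.Cone x m := by
      rcases eq_or_ne p x with rfl | h
      · exact ⟨p', hp', fun e => hpp' e.symm, hp'C⟩
      · exact ⟨p, hp, h, hpC⟩
    obtain ⟨r, hr, hrx, ⟨l₁, hl₁, hxl₁, hmeet, hrl₁⟩⟩ := this
    have hll₁ : l = l₁ := line_unique hl hl₁ hrx.symm hxl hr hxl₁ hrl₁
    intro z hz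
    exact ⟨l₁, hl₁, hxl₁, hmeet, hll₁ ▸ hz⟩
  · by_cases hpm : p ∈ m
    · by_cases hp'm : p' ∈ m
      · have : l = m := line_unique hl hm hpp' hp hp' hpm hp'm
        intro z hz
        exact mem_cone_of_mem hm hxm (this ▸ hz)
      · exact cone_secant_sub_aux hm hxm hl hp' hp hpp'.symm hp'C hpC hxl hp'm
    · exact cone_secant_sub_aux hm hxm hl hp hp' hpp' hpC hp'C hxl hpm

/-- A plane is contained in the cone over its base line from its apex. -/
lemma plane_sub_cone {P : ProjSpace S} {m : Set S} (hm : m ∈ P.L) {x : S} (hxm : x ∉ m) :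
    P.span (insert x m) ⊆ P.Cone x m := by
  apply Set.sInter_subset_of_mem
  refine ⟨cone_isSubspace hm hxm, ?_⟩
  intro z hz
  rcases hz with rfl | hz
  · exact vertex_mem_cone hm hxm
  · exact mem_cone_of_mem hm hxm hz

/-- For every line there is a line disjoint from it. -/
lemma exists_disjoint_line (P : ProjSpace S) {k : Set S} (hk : k ∈ P.L) :
    ∃ l ∈ P.L, k ∩ l = ∅ := by
  obtain ⟨g, hg, h, hh, hgh⟩ := P.dim3
  by_cases h1 : (k ∩ g).Nonempty
  · by_cases h2 : (k ∩ h).Nonempty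
    · obtain ⟨s, hsk, hsg⟩ := h1
      obtain ⟨t, htk, hth⟩ := h2
      obtain ⟨u, hug, hus⟩ := exists_mem_ne hg s
      obtain ⟨v, hvh, hvt⟩ := exists_mem_ne hh t
      have huv : u ≠ v := by
        rintro rfl
        exact absurd (hgh ▸ (⟨hug, hvh⟩ : u ∈ g ∩ h)) (Set.notMem_empty u)
      obtain ⟨l₀, hl₀, hul₀, hvl₀⟩ := P.join u v huv
      refine ⟨l₀, hl₀, ?_⟩
      rw [Set.eq_empty_iff_forall_notMem]
      rintro z ⟨hzk, hzl₀⟩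
      have huk : u ∉ k := by
        intro huk
        have : g = k := line_unique hg hk hus hug hsg huk hsk
        exact absurd (hgh ▸ (⟨this ▸ htk, hth⟩ : t ∈ g ∩ h)) (Set.notMem_empty t)
      have hvk : v ∉ k := by
        intro hvk
        have : h = k := line_unique hh hk hvt hvh hth hvk htk
        exact absurd (hgh ▸ (⟨hsg, this ▸ hsk⟩ : s ∈ g ∩ h)) (Set.notMem_empty s)
      have hsl₀ : s ∉ l₀ := by
        intro hsl₀
        have : l₀ = g := line_unique hl₀ hg hus hul₀ hsl₀ hug hsg
        exact absurd (hgh ▸ (⟨this ▸ hvl₀, hvh⟩ : v ∈ g ∩ h)) (Set.notMem_empty v)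
      have htl₀ : t ∉ l₀ := by
        intro htl₀
        have : l₀ = h := line_unique hl₀ hh hvt hvl₀ htl₀ hvh hth
        exact absurd (hgh ▸ (⟨hug, this ▸ hul₀⟩ : u ∈ g ∩ h)) (Set.notMem_empty u)
      have hkl₀ : k ≠ l₀ := fun e => huk (e ▸ hul₀)
      have hzs : z ≠ s := fun e => hsl₀ (e ▸ hzl₀)
      have hzu : z ≠ u := fun e => huk (e ▸ hzk)
      have hzt : z ≠ t := fun e => htl₀ (e ▸ hzl₀)
      have hzv : z ≠ v := fun e => hvk (e ▸ hzk)
      have := P.veblen k hk l₀ hl₀ g hg h hh z s u t v hkl₀ hzs hzu hzt hzv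
        hzk hsk htk hzl₀ hul₀ hvl₀ hsg hug hth hvh
      rw [hgh] at this
      exact absurd this (by simp [Set.not_nonempty_empty])
    · exact ⟨h, hh, Set.not_nonempty_iff_eq_empty.mp h2⟩
  · exact ⟨g, hg, Set.not_nonempty_iff_eq_empty.mp h1⟩

end ProjSpace

namespace ProjSpace

/-- A proper line has more than one point outside `W`. -/
lemma proper_one_lt_encard_diff {S : Type*} {P : ProjSpace S} {W : Set S} {lam : ℕ}
    (hlam : 0 < lam) (hind : P.HasIndex W lam)
    (hsize : ∀ k ∈ P.L, 2 * (lam : ℕ∞) + 2 ≤ k.encard)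
    {k : Set S} (hk : k ∈ P.L) (hkW : ¬ k ⊆ W) : 1 < (k \ W).encard := by
  by_contra hle
  push_neg at hle
  have h1 : (k ∩ W).encard ≤ (lam : ℕ∞) := hind.2 k hk hkW
  have h3 : k.encard ≤ 1 + (lam : ℕ∞) := by
    rw [← Set.encard_diff_add_encard_inter k W]
    exact add_le_add hle h1
  have h4 : (2 * (lam : ℕ∞) + 2) ≤ 1 + (lam : ℕ∞) := le_trans (hsize k hk) h3
  have h5 : 2 * lam + 2 ≤ 1 + lam := by exact_mod_cast h4
  omega

/-- There is a point outside `W`. -/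
lemma exists_notMem_horizon {S : Type*} {P : ProjSpace S} {W : Set S} {lam : ℕ}
    (hlam : 0 < lam) (hind : P.HasIndex W lam)
    (hsize : ∀ k ∈ P.L, 2 * (lam : ℕ∞) + 2 ≤ k.encard) : ∃ c, c ∉ W := by
  obtain ⟨k, hk, hcard⟩ := hind.1
  by_cases hkW : k ⊆ W
  · exfalso
    have h0 : k ∩ W = k := Set.inter_eq_self_of_subset_left hkW
    have h1 : (2 * (lam : ℕ∞) + 2) ≤ (lam : ℕ∞) := by
      calc (2 * (lam : ℕ∞) + 2) ≤ k.encard := hsize k hk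
        _ = (k ∩ W).encard := by rw [h0]
        _ = (lam : ℕ∞) := hcard
    have h2 : 2 * lam + 2 ≤ lam := by exact_mod_cast h1
    omega
  · obtain ⟨c, hc⟩ := Set.encard_pos.mp
      (lt_trans zero_lt_one (proper_one_lt_encard_diff hlam hind hsize hk hkW))
    exact ⟨c, hc.2⟩

end ProjSpace

open ProjSpace in
/-- through every point there are at least three pairwise distinct
non-coplanar proper lines. -/
theorem three_noncoplanar_proper_lines {S : Type*} (P : ProjSpace S) (W : Set S)
    (lam : ℕ) (hlam : 0 < lam) (hind : P.HasIndex W lam)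
    (hsize : ∀ k ∈ P.L, 2 * (lam : ℕ∞) + 2 ≤ k.encard) :
    ∀ a : S, ∃ k₁ ∈ P.L, ∃ k₂ ∈ P.L, ∃ k₃ ∈ P.L,
      ¬ k₁ ⊆ W ∧ ¬ k₂ ⊆ W ∧ ¬ k₃ ⊆ W ∧
      k₁ ≠ k₂ ∧ k₁ ≠ k₃ ∧ k₂ ≠ k₃ ∧
      a ∈ k₁ ∧ a ∈ k₂ ∧ a ∈ k₃ ∧
      ¬ ∃ Pl : Set S, P.IsPlane Pl ∧ k₁ ⊆ Pl ∧ k₂ ⊆ Pl ∧ k₃ ⊆ Pl := by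
  intro a
  classical
  obtain ⟨c₀, hc₀⟩ := exists_notMem_horizon hlam hind hsize
  -- a proper line through `a`
  have hk₃ex : ∃ k₃ ∈ P.L, a ∈ k₃ ∧ ¬ k₃ ⊆ W := by
    rcases eq_or_ne c₀ a with rfl | hne
    · obtain ⟨g, hg, -⟩ := P.dim3
      obtain ⟨b, hb, hba⟩ := exists_mem_ne hg c₀
      obtain ⟨k, hk, hak, hbk⟩ := P.join c₀ b (Ne.symm hba)
      exact ⟨k, hk, hak, fun hsub => hc₀ (hsub hak)⟩
    · obtain ⟨k, hk, hak, hck⟩ := P.join a c₀ (Ne.symm hne)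
      exact ⟨k, hk, hak, fun hsub => hc₀ (hsub hck)⟩
  obtain ⟨k₃, hk₃L, hak₃, hk₃W⟩ := hk₃ex
  obtain ⟨l₀, hl₀, hdisj₀⟩ := P.exists_disjoint_line hk₃L
  obtain ⟨c, hck₃, hcW⟩ := Set.encard_pos.mp
    (lt_trans zero_lt_one (proper_one_lt_encard_diff hlam hind hsize hk₃L hk₃W))
  have hcl₀ : c ∉ l₀ := fun h => (Set.eq_empty_iff_forall_notMem.mp hdisj₀ c) ⟨hck₃, h⟩
  obtain ⟨u₁, hu₁, u₂, hu₂, hu₁₂⟩ := P.two_points l₀ hl₀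
  have hcu₁ : c ≠ u₁ := fun e => hcl₀ (e ▸ hu₁)
  have hcu₂ : c ≠ u₂ := fun e => hcl₀ (e ▸ hu₂)
  obtain ⟨n₁, hn₁, hcn₁, hu₁n₁⟩ := P.join c u₁ hcu₁
  obtain ⟨n₂, hn₂, hcn₂, hu₂n₂⟩ := P.join c u₂ hcu₂
  have hn₁₂ : n₁ ≠ n₂ := by
    rintro rfl
    exact hcl₀ ((line_unique hn₁ hl₀ hu₁₂ hu₁n₁ hu₂n₂ hu₁ hu₂) ▸ hcn₁)
  have hn₁W : ¬ n₁ ⊆ W := fun h => hcW (h hcn₁)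
  have hn₂W : ¬ n₂ ⊆ W := fun h => hcW (h hcn₂)
  obtain ⟨p₁, hp₁, hp₁c⟩ := Set.exists_ne_of_one_lt_encard
    (proper_one_lt_encard_diff hlam hind hsize hn₁ hn₁W) c
  obtain ⟨p₂, hp₂, hp₂c⟩ := Set.exists_ne_of_one_lt_encard
    (proper_one_lt_encard_diff hlam hind hsize hn₂ hn₂W) c
  have hp₁₂ : p₁ ≠ p₂ := by
    rintro rfl
    exact hp₁c (P.unique_meet n₁ hn₁ n₂ hn₂ hn₁₂ ⟨hp₁.1, hp₂.1⟩ ⟨hcn₁, hcn₂⟩)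
  obtain ⟨l, hl, hp₁l, hp₂l⟩ := P.join p₁ p₂ hp₁₂
  have hp₁C : p₁ ∈ P.Cone c l₀ := ⟨n₁, hn₁, hcn₁, ⟨u₁, hu₁n₁, hu₁⟩, hp₁.1⟩
  have hp₂C : p₂ ∈ P.Cone c l₀ := ⟨n₂, hn₂, hcn₂, ⟨u₂, hu₂n₂, hu₂⟩, hp₂.1⟩
  have hlC : l ⊆ P.Cone c l₀ :=
    cone_isSubspace hl₀ hcl₀ l hl p₁ hp₁l p₂ hp₂l hp₁₂ hp₁C hp₂C
  -- the auxiliary line `l` misses `k₃` entirely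
  have hdisj : l ∩ k₃ = ∅ := by
    rw [Set.eq_empty_iff_forall_notMem]
    rintro z ⟨hzl, hzk₃⟩
    have hzc : z ≠ c := by
      rintro rfl
      have h1 : l = n₁ := line_unique hl hn₁ hp₁c hp₁l hzl hp₁.1 hcn₁
      have h2 : p₂ ∈ n₁ := by rw [← h1]; exact hp₂l
      exact hp₂c (P.unique_meet n₁ hn₁ n₂ hn₂ hn₁₂ ⟨h2, hp₂.1⟩ ⟨hcn₁, hcn₂⟩)
    obtain ⟨l', hl', hcl', ⟨w, hwl', hwl₀⟩, hzl'⟩ := hlC hzl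
    have h3 : l' = k₃ := line_unique hl' hk₃L hzc hzl' hcl' hzk₃ hck₃
    exact (Set.eq_empty_iff_forall_notMem.mp hdisj₀ w) ⟨h3 ▸ hwl', hwl₀⟩
  -- two points of `l` off `W`
  have hlW : ¬ l ⊆ W := fun h => hp₁.2 (h hp₁l)
  have hllt := proper_one_lt_encard_diff hlam hind hsize hl hlW
  obtain ⟨b₁, hb₁⟩ := Set.encard_pos.mp (lt_trans zero_lt_one hllt)
  obtain ⟨b₂, hb₂, hb₂₁⟩ := Set.exists_ne_of_one_lt_encard hllt b₁
  have hal : a ∉ l := fun h => (Set.eq_empty_iff_forall_notMem.mp hdisj a) ⟨h, hak₃⟩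
  have hab₁ : a ≠ b₁ := fun e => hal (e ▸ hb₁.1)
  have hab₂ : a ≠ b₂ := fun e => hal (e ▸ hb₂.1)
  obtain ⟨k₁, hk₁L, hak₁, hb₁k₁⟩ := P.join a b₁ hab₁
  obtain ⟨k₂, hk₂L, hak₂, hb₂k₂⟩ := P.join a b₂ hab₂
  have hk₁W : ¬ k₁ ⊆ W := fun h => hb₁.2 (h hb₁k₁)
  have hk₂W : ¬ k₂ ⊆ W := fun h => hb₂.2 (h hb₂k₂)
  have hk₁₂ : k₁ ≠ k₂ := by
    rintro rfl
    have h1 : l = k₁ := line_unique hl hk₁L hb₂₁ hb₂.1 hb₁.1 hb₂k₂ hb₁k₁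
    rw [h1] at hal
    exact hal hak₁
  have hk₁₃ : k₁ ≠ k₃ := by
    rintro rfl
    exact (Set.eq_empty_iff_forall_notMem.mp hdisj b₁) ⟨hb₁.1, hb₁k₁⟩
  have hk₂₃ : k₂ ≠ k₃ := by
    rintro rfl
    exact (Set.eq_empty_iff_forall_notMem.mp hdisj b₂) ⟨hb₂.1, hb₂k₂⟩
  refine ⟨k₁, hk₁L, k₂, hk₂L, k₃, hk₃L, hk₁W, hk₂W, hk₃W, hk₁₂, hk₁₃, hk₂₃,
    hak₁, hak₂, hak₃, ?_⟩
  rintro ⟨Pl, ⟨m, hm, x, hxm, rfl⟩, hP₁, hP₂, hP₃⟩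
  have hPC : P.span (insert x m) ⊆ P.Cone x m := plane_sub_cone hm hxm
  have hb₁C : b₁ ∈ P.Cone x m := hPC (hP₁ hb₁k₁)
  have hb₂C : b₂ ∈ P.Cone x m := hPC (hP₂ hb₂k₂)
  have hlC' : l ⊆ P.Cone x m :=
    cone_isSubspace hm hxm l hl b₁ hb₁.1 b₂ hb₂.1 (Ne.symm hb₂₁) hb₁C hb₂C
  have hk₃C : k₃ ⊆ P.Cone x m := fun z hz => hPC (hP₃ hz)
  have hlk₃ : l ≠ k₃ := by
    intro e
    exact (Set.eq_empty_iff_forall_notMem.mp hdisj b₁) ⟨hb₁.1, e ▸ hb₁.1⟩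
  have hmeet := cone_lines_meet hm hxm hl hk₃L hlC' hk₃C hlk₃
  rw [hdisj] at hmeet
  exact absurd hmeet (by simp)
end

section
/- Let Π be a plane of P and k₁, k₂, k₃ the sides of a triangle of undeleted lines contained in Π. Then Π equals the set of points a ∈ S for which there exists an undeleted line through a meeting each of k₁, k₂, k₃. Hence planes of P are definable in terms of G. -/
namespace ProjSpace


variable {S : Type*} (P : ProjSpace S)

theorem line_eq_of_two {k l : Set S} (hk : k ∈ P.L) (hl : l ∈ P.L)
    {a b : S} (hab : a ≠ b) (hak : a ∈ k) (hal : a ∈ l) (hbk : b ∈ k) (hbl : b ∈ l) :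
    k = l := by
  by_contra h
  exact hab (P.unique_meet k hk l hl h ⟨hak, hal⟩ ⟨hbk, hbl⟩)

/-- The cone with apex `q` over `k₀`. -/
def cone (q : S) (k₀ : Set S) : Set S :=
  {x | ∃ g ∈ P.L, q ∈ g ∧ x ∈ g ∧ (g ∩ k₀).Nonempty}

variable {q : S} {k₀ : Set S} (hk₀ : k₀ ∈ P.L) (hq : q ∉ k₀)
include hk₀ hq

theorem insert_subset_cone : insert q k₀ ⊆ P.cone q k₀ := by
  intro x hx
  rcases hx with rfl | hx
  · obtain ⟨y, hy, -⟩ := P.two_points k₀ hk₀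
    obtain ⟨g, hg, hqg, hyg⟩ := P.join x y (fun h => hq (h ▸ hy))
    exact ⟨g, hg, hqg, hqg, y, hyg, hy⟩
  · obtain ⟨g, hg, hqg, hxg⟩ := P.join q x (fun h => hq (h ▸ hx))
    exact ⟨g, hg, hqg, hxg, x, hxg, hx⟩

omit hk₀ hq in
/-- Any line containing `q` and a second point of the cone meets `k₀`. -/
theorem cone_line_through_q_meets_base {m : Set S} (hm : m ∈ P.L)
    {u : S} (hu : u ∈ P.cone q k₀) (huq : u ≠ q) (hqm : q ∈ m) (hum : u ∈ m) :
    (m ∩ k₀).Nonempty := by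
  obtain ⟨g, hg, hqg, hug, hmeet⟩ := hu
  have : g = m := line_eq_of_two P hg hm huq.symm hqg hqm hug hum
  exact this ▸ hmeet

/-- A line not through `q` with two distinct points in the cone meets `k₀`. -/
theorem transversal_meets_base {t : Set S} (ht : t ∈ P.L) (hqt : q ∉ t)
    {u v : S} (hut : u ∈ t) (hvt : v ∈ t) (huv : u ≠ v)
    (hu : u ∈ P.cone q k₀) (hv : v ∈ P.cone q k₀) : (t ∩ k₀).Nonempty := by
  by_cases huk : u ∈ k₀
  · exact ⟨u, hut, huk⟩
  by_cases hvk : v ∈ k₀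
  · exact ⟨v, hvt, hvk⟩
  obtain ⟨gu, hgu, hqgu, hugu, yu, hyugu, hyuk⟩ := hu
  obtain ⟨gv, hgv, hqgv, hvgv, yv, hyvgv, hyvk⟩ := hv
  have hguv : gu ≠ gv := by
    rintro rfl
    have : gu = t := line_eq_of_two P hgu ht huv hugu hut hvgv hvt
    exact hqt (this ▸ hqgu)
  exact P.veblen gu hgu gv hgv t ht k₀ hk₀ q u v yu yv hguv
    (fun h => hqt (h ▸ hut)) (fun h => hqt (h ▸ hvt))
    (fun h => hq (h ▸ hyuk)) (fun h => hq (h ▸ hyvk))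
    hqgu hugu hyugu hqgv hvgv hyvgv hut hvt hyuk hyvk

theorem cone_subspace : P.IsSubspace (P.cone q k₀) := by
  intro t ht u hut v hvt huv hu hv w hwt
  by_cases hqt : q ∈ t
  · have hmeet : (t ∩ k₀).Nonempty := by
      by_cases huq : u = q
      · exact P.cone_line_through_q_meets_base ht hv
          (fun h => huv (huq.trans h.symm)) hqt hvt
      · exact P.cone_line_through_q_meets_base ht hu huq hqt hut
    exact ⟨t, ht, hqt, hwt, hmeet⟩
  · by_cases hwu : w = u
    · exact hwu ▸ hu
    by_cases hwv : w = v
    · exact hwv ▸ hv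
    by_cases hwk : w ∈ k₀
    · exact P.insert_subset_cone hk₀ hq (Set.mem_insert_of_mem _ hwk)
    obtain ⟨yt, hytt, hytk⟩ := P.transversal_meets_base hk₀ hq ht hqt hut hvt huv hu hv
    have key : ∀ u' : S, u' ∈ t → u' ∉ k₀ → u' ≠ w → u' ∈ P.cone q k₀ →
        w ∈ P.cone q k₀ := by
      intro u' hu't hu'k hu'w hu'
      obtain ⟨g, hg, hqg, hu'g, yg, hygg, hygk⟩ := hu'
      have hqw : q ≠ w := fun h => hqt (h ▸ hwt)
      obtain ⟨gw, hgw, hqgw, hwgw⟩ := P.join q w hqw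
      have hgt : g ≠ t := fun h => hqt (h ▸ hqg)
      have := P.veblen g hg t ht gw hgw k₀ hk₀ u' q w yg yt hgt
        (fun h => hqt (h ▸ hu't)) hu'w
        (fun h => hu'k (h ▸ hygk)) (fun h => hu'k (h ▸ hytk))
        hu'g hqg hygg hu't hwt hytt hqgw hwgw hygk hytk
      exact ⟨gw, hgw, hqgw, hwgw, this⟩
    by_cases huk : u ∈ k₀
    · have hvk : v ∉ k₀ := by
        intro hvk
        have : t = k₀ := line_eq_of_two P ht hk₀ huv hut huk hvt hvk
        exact hwk (this ▸ hwt)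
      exact key v hvt hvk (fun h => hwv h.symm) hv
    · exact key u hut huk (fun h => hwu h.symm) hu

/-- A line through `q` inside the cone meets every line inside the cone
not through `q`. -/
theorem cone_lines_meet_q {m n : Set S} (hm : m ∈ P.L) (hn : n ∈ P.L)
    (hmc : m ⊆ P.cone q k₀) (hnc : n ⊆ P.cone q k₀) (hqm : q ∈ m) (hqn : q ∉ n) :
    (m ∩ n).Nonempty := by
  have hmk : (m ∩ k₀).Nonempty := by
    obtain ⟨x, hx, y, hy, hxy⟩ := P.two_points m hm
    by_cases hxq : x = q
    · exact P.cone_line_through_q_meets_base hm (hmc hy)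
        (fun h => hxy (hxq.trans h.symm)) hqm hy
    · exact P.cone_line_through_q_meets_base hm (hmc hx) hxq hqm hx
  obtain ⟨ym, hymm, hymk⟩ := hmk
  obtain ⟨b0, hb0, d0, hd0, hbd0⟩ := P.two_points n hn
  have hnk : (n ∩ k₀).Nonempty :=
    P.transversal_meets_base hk₀ hq hn hqn hb0 hd0 hbd0 (hnc hb0) (hnc hd0)
  obtain ⟨yn, hynn, hynk⟩ := hnk
  by_cases hymn : ym ∈ n
  · exact ⟨ym, hymm, hymn⟩
  have hnek : n ≠ k₀ := fun h => hymn (h.symm ▸ hymk)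
  -- pick b ∈ n with b ≠ yn
  obtain ⟨b, hbn, hbyn⟩ : ∃ b ∈ n, b ≠ yn := by
    by_cases h : b0 = yn
    · exact ⟨d0, hd0, fun hh => hbd0 (h.trans hh.symm)⟩
    · exact ⟨b0, hb0, h⟩
  by_cases hbm : b ∈ m
  · exact ⟨b, hbm, hbn⟩
  have hbk : b ∉ k₀ := fun h =>
    hbyn (P.unique_meet n hn k₀ hk₀ hnek ⟨hbn, h⟩ ⟨hynn, hynk⟩)
  obtain ⟨g, hg, hqg, hbg, yb, hybg, hybk⟩ := hnc hbn
  have hqym : q ≠ ym := fun h => hq (h ▸ hymk)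
  have hybym : yb ≠ ym := by
    intro h
    have : g = m := line_eq_of_two P hg hm hqym hqg hqm (h ▸ hybg) hymm
    exact hbm (this ▸ hbg)
  have hybyn : yb ≠ yn := by
    intro h
    have : g = n := line_eq_of_two P hg hn hbyn hbg hbn (h ▸ hybg) hynn
    exact hqn (this ▸ hqg)
  have hybb : yb ≠ b := fun h => hbk (h ▸ hybk)
  have hybq : yb ≠ q := fun h => hq (h ▸ hybk)
  have hkg : k₀ ≠ g := fun h => hq (h.symm ▸ hqg)
  have := P.veblen k₀ hk₀ g hg n hn m hm yb yn b ym q hkg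
    hybyn hybb hybym hybq hybk hynk hymk hybg hbg hqg hynn hbn hymm hqm
  obtain ⟨z, hz1, hz2⟩ := this
  exact ⟨z, hz2, hz1⟩

/-- Any two lines inside the cone meet. -/
theorem cone_lines_meet_s13 {m n : Set S} (hm : m ∈ P.L) (hn : n ∈ P.L)
    (hmc : m ⊆ P.cone q k₀) (hnc : n ⊆ P.cone q k₀) : (m ∩ n).Nonempty := by
  by_cases hmn : m = n
  · obtain ⟨x, hx, -⟩ := P.two_points m hm
    exact ⟨x, hx, hmn ▸ hx⟩
  by_cases hqm : q ∈ m
  · by_cases hqn : q ∈ n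
    · exact ⟨q, hqm, hqn⟩
    · exact P.cone_lines_meet_q hk₀ hq hm hn hmc hnc hqm hqn
  by_cases hqn : q ∈ n
  · obtain ⟨z, hz1, hz2⟩ := P.cone_lines_meet_q hk₀ hq hn hm hnc hmc hqn hqm
    exact ⟨z, hz2, hz1⟩
  -- both lines avoid q
  obtain ⟨xm, hxm, ym', hym', hxym⟩ := P.two_points m hm
  obtain ⟨xn, hxn, yn', hyn', hxyn⟩ := P.two_points n hn
  obtain ⟨ym, hymm, hymk⟩ :=
    P.transversal_meets_base hk₀ hq hm hqm hxm hym' hxym (hmc hxm) (hmc hym')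
  obtain ⟨yn, hynn, hynk⟩ :=
    P.transversal_meets_base hk₀ hq hn hqn hxn hyn' hxyn (hnc hxn) (hnc hyn')
  by_cases hymn : ym ∈ n
  · exact ⟨ym, hymm, hymn⟩
  by_cases hynm : yn ∈ m
  · exact ⟨yn, hynm, hynn⟩
  have hmek : m ≠ k₀ := fun h => hynm (h.symm ▸ hynk)
  have hnek : n ≠ k₀ := fun h => hymn (h.symm ▸ hymk)
  have hqym : q ≠ ym := fun h => hq (h ▸ hymk)
  have hqyn : q ≠ yn := fun h => hq (h ▸ hynk)
  obtain ⟨hh, hhL, hqhh, hynhh⟩ := P.join q yn hqyn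
  obtain ⟨hh', hh'L, hqhh', hymhh'⟩ := P.join q ym hqym
  -- pick b ∈ m with b ≠ ym, then b ∉ k₀
  obtain ⟨b, hbm, hbym⟩ : ∃ b ∈ m, b ≠ ym := by
    by_cases h : xm = ym
    · exact ⟨ym', hym', fun hhh => hxym (h.trans hhh.symm)⟩
    · exact ⟨xm, hxm, h⟩
  have hbk : b ∉ k₀ := fun h =>
    hbym (P.unique_meet m hm k₀ hk₀ hmek ⟨hbm, h⟩ ⟨hymm, hymk⟩)
  obtain ⟨d, hdn, hdyn⟩ : ∃ d ∈ n, d ≠ yn := by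
    by_cases h : xn = yn
    · exact ⟨yn', hyn', fun hhh => hxyn (h.trans hhh.symm)⟩
    · exact ⟨xn, hxn, h⟩
  have hdk : d ∉ k₀ := fun h =>
    hdyn (P.unique_meet n hn k₀ hk₀ hnek ⟨hdn, h⟩ ⟨hynn, hynk⟩)
  by_cases hbh : b ∈ hh
  · by_cases hdh : d ∈ hh'
    · -- final degenerate case: Veblen with apex q
      have hne : hh ≠ hh' := by
        intro h
        have hymyn : ym ≠ yn := fun hh2 => hymn (hh2 ▸ hynn)
        have : hh = k₀ := line_eq_of_two P hhL hk₀ (Ne.symm hymyn)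
          hynhh hynk (h ▸ hymhh') hymk
        exact hq (this ▸ hqhh)
      exact P.veblen hh hhL hh' hh'L m hm n hn q b ym yn d hne
        (fun h => hqm (h ▸ hbm)) hqym hqyn (fun h => hqn (h ▸ hdn))
        hqhh hbh hynhh hqhh' hymhh' hdh hbm hymm hynn hdn
    · -- d ∉ hh' : use the cone line through q and d
      obtain ⟨g, hg, hqg, hdg, yd, hydg, hydk⟩ := hnc hdn
      have hgc : g ⊆ P.cone q k₀ := fun x hx => ⟨g, hg, hqg, hx, yd, hydg, hydk⟩
      obtain ⟨z, hzg, hzm⟩ := P.cone_lines_meet_q hk₀ hq hg hm hgc hmc hqg hqm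
      have hydym : yd ≠ ym := by
        intro h
        have : g = hh' := line_eq_of_two P hg hh'L hqym hqg hqhh' (h ▸ hydg) hymhh'
        exact hdh (this ▸ hdg)
      have hydyn : yd ≠ yn := by
        intro h
        have : g = n := line_eq_of_two P hg hn hdyn hdg hdn (h ▸ hydg) hynn
        exact hqn (this ▸ hqg)
      have hydd : yd ≠ d := fun h => hdk (h ▸ hydk)
      have hydz : yd ≠ z := by
        intro h
        have hzk : z ∈ k₀ := h ▸ hydk
        have : z = ym := P.unique_meet m hm k₀ hk₀ hmek ⟨hzm, hzk⟩ ⟨hymm, hymk⟩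
        exact hydym (h.trans this)
      have hkg : k₀ ≠ g := fun h => hq (h.symm ▸ hqg)
      have := P.veblen k₀ hk₀ g hg n hn m hm yd yn d ym z hkg
        hydyn hydd hydym hydz hydk hynk hymk hydg hdg hzg hynn hdn hymm hzm
      obtain ⟨w, hw1, hw2⟩ := this
      exact ⟨w, hw2, hw1⟩
  · -- b ∉ hh : use the cone line through q and b
    obtain ⟨g, hg, hqg, hbg, yb, hybg, hybk⟩ := hmc hbm
    have hgc : g ⊆ P.cone q k₀ := fun x hx => ⟨g, hg, hqg, hx, yb, hybg, hybk⟩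
    obtain ⟨z, hzg, hzn⟩ := P.cone_lines_meet_q hk₀ hq hg hn hgc hnc hqg hqn
    have hybyn : yb ≠ yn := by
      intro h
      have : g = hh := line_eq_of_two P hg hhL hqyn hqg hqhh (h ▸ hybg) hynhh
      exact hbh (this ▸ hbg)
    have hybym : yb ≠ ym := by
      intro h
      have : g = m := line_eq_of_two P hg hm hbym hbg hbm (h ▸ hybg) hymm
      exact hqm (this ▸ hqg)
    have hybb : yb ≠ b := fun h => hbk (h ▸ hybk)
    have hybz : yb ≠ z := by
      intro h
      have hzk : z ∈ k₀ := h ▸ hybk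
      have : z = yn := P.unique_meet n hn k₀ hk₀ hnek ⟨hzn, hzk⟩ ⟨hynn, hynk⟩
      exact hybyn (h.trans this)
    have hkg : k₀ ≠ g := fun h => hq (h.symm ▸ hqg)
    exact P.veblen k₀ hk₀ g hg m hm n hn yb ym b yn z hkg
      hybym hybb hybyn hybz hybk hymk hynk hybg hbg hzg hymm hbm hynn hzn

omit hk₀ hq in
theorem span_isSubspace (X : Set S) : P.IsSubspace (P.span X) := by
  intro k hk a hak b hbk hab ha hb x hx
  intro Y hY
  exact hY.1 k hk a hak b hbk hab (ha Y hY) (hb Y hY) hx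

theorem plane_subset_cone : P.span (insert q k₀) ⊆ P.cone q k₀ :=
  Set.sInter_subset_of_mem ⟨P.cone_subspace hk₀ hq, P.insert_subset_cone hk₀ hq⟩

end ProjSpace

open ProjSpace in
/-- if `k₁, k₂, k₃` are the sides of a triangle of undeleted lines
contained in a plane `Pl`, then `Pl` is exactly the set of points lying on an undeleted
line meeting each of `k₁, k₂, k₃`. -/
theorem plane_eq_points_on_undeleted_transversals {S : Type*} (P : ProjSpace S)
    (Kdel : Set (Set S)) (hK : Kdel ⊆ P.L)
    (hpps : ∀ Pl : Set S, P.IsPlane Pl → ∀ a ∈ Pl,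
      ∃ l ∈ P.L, l ∉ Kdel ∧ a ∈ l ∧ l ⊆ Pl)
    (Pl : Set S) (hPl : P.IsPlane Pl)
    (k₁ k₂ k₃ : Set S) (htri : LineTriangle P k₁ k₂ k₃)
    (h₁ : k₁ ∉ Kdel) (h₂ : k₂ ∉ Kdel) (h₃ : k₃ ∉ Kdel)
    (hs₁ : k₁ ⊆ Pl) (hs₂ : k₂ ⊆ Pl) (hs₃ : k₃ ⊆ Pl) :
    Pl = {a : S | ∃ k ∈ P.L, k ∉ Kdel ∧ a ∈ k ∧
      (k ∩ k₁).Nonempty ∧ (k ∩ k₂).Nonempty ∧ (k ∩ k₃).Nonempty} := by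
  obtain ⟨k₀, hk₀, q, hq, hPlEq⟩ := hPl
  have hsubPl : P.IsSubspace Pl := by rw [hPlEq]; exact P.span_isSubspace _
  have hPlC : Pl ⊆ P.cone q k₀ := by rw [hPlEq]; exact P.plane_subset_cone hk₀ hq
  obtain ⟨hL1, hL2, hL3, -, -, -, -, -, -, hconc⟩ := htri
  ext a
  constructor
  · intro ha
    obtain ⟨l, hlL, hlK, hal, hlPl⟩ := hpps Pl ⟨k₀, hk₀, q, hq, hPlEq⟩ a ha
    exact ⟨l, hlL, hlK, hal,
      P.cone_lines_meet_s13 hk₀ hq hlL hL1 (hlPl.trans hPlC) (hs₁.trans hPlC),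
      P.cone_lines_meet_s13 hk₀ hq hlL hL2 (hlPl.trans hPlC) (hs₂.trans hPlC),
      P.cone_lines_meet_s13 hk₀ hq hlL hL3 (hlPl.trans hPlC) (hs₃.trans hPlC)⟩
  · rintro ⟨k, hkL, -, hak, ⟨p₁, hp₁k, hp₁⟩, ⟨p₂, hp₂k, hp₂⟩, ⟨p₃, hp₃k, hp₃⟩⟩
    have htwo : ∃ u ∈ k, ∃ v ∈ k, u ≠ v ∧ u ∈ Pl ∧ v ∈ Pl := by
      by_cases h12 : p₁ = p₂
      · by_cases h13 : p₁ = p₃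
        · exact absurd ⟨p₁, ⟨hp₁, by rw [h12]; exact hp₂⟩, by rw [h13]; exact hp₃⟩ hconc
        · exact ⟨p₁, hp₁k, p₃, hp₃k, h13, hs₁ hp₁, hs₃ hp₃⟩
      · exact ⟨p₁, hp₁k, p₂, hp₂k, h12, hs₁ hp₁, hs₂ hp₂⟩
    obtain ⟨u, huk, v, hvk, huv, huPl, hvPl⟩ := htwo
    exact hsubPl k hkL u huk v hvk huv huPl hvPl hak
end

section
/- In a Grassmann space M = P(V,k), if S is a (maximal) star and T is a (maximal) top with S ∩ T ≠ ∅, then S ∩ T is a line (a k-pencil); moreover if U₁ ∈ S \ T and U₂ ∈ T \ S then U₁ and U₂ are not collinear in M. -/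
variable {K V : Type*} [Field K] [AddCommGroup V] [Module K V]

/-- A `k`-pencil: the set of `k`-dimensional subspaces between a fixed
`(k-1)`-dimensional subspace `H` and a fixed `(k+1)`-dimensional subspace `B`.
These are the lines of the Grassmann space `P(V, k)`. -/
def IsPencil (k : ℕ) (p : Set (Submodule K V)) : Prop :=
  ∃ H B : Submodule K V, Module.finrank K H = k - 1 ∧ Module.finrank K B = k + 1 ∧
    H ≤ B ∧ p = {U : Submodule K V | H ≤ U ∧ U ≤ B ∧ Module.finrank K U = k}

/-- The star `S(H)` of all `k`-subspaces containing `H`. -/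
def gstar (k : ℕ) (H : Submodule K V) : Set (Submodule K V) :=
  {U : Submodule K V | Module.finrank K U = k ∧ H ≤ U}

/-- The top `T(B)` of all `k`-subspaces contained in `B`. -/
def gtop (k : ℕ) (B : Submodule K V) : Set (Submodule K V) :=
  {U : Submodule K V | Module.finrank K U = k ∧ U ≤ B}

/-- Collinearity in the Grassmann space: two distinct points on a common pencil. -/
def GCollinear (k : ℕ) (U₁ U₂ : Submodule K V) : Prop :=
  U₁ ≠ U₂ ∧ ∃ p : Set (Submodule K V), IsPencil k p ∧ U₁ ∈ p ∧ U₂ ∈ p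

/-- if a star and a top meet, their intersection is a line (a pencil),
and points of `S \ T` and `T \ S` are never collinear. -/
theorem star_cap_top {n k : ℕ} [FiniteDimensional K V]
    (hn : Module.finrank K V = n) (hk1 : 1 < k) (hk2 : k < n - 1)
    (H B : Submodule K V)
    (hH : Module.finrank K H = k - 1) (hB : Module.finrank K B = k + 1)
    (hST : (gstar k H ∩ gtop k B).Nonempty) :
    IsPencil k (gstar k H ∩ gtop k B) ∧
      ∀ U₁ ∈ gstar k H \ gtop k B, ∀ U₂ ∈ gtop k B \ gstar k H,
        ¬ GCollinear k U₁ U₂ := by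
  obtain ⟨U0, ⟨hU0k, hHU0⟩, hU0k', hU0B⟩ := hST
  have hHB : H ≤ B := hHU0.trans hU0B
  constructor
  · exact ⟨H, B, hH, hB, hHB, by
      ext U
      simp only [gstar, gtop, Set.mem_inter_iff, Set.mem_setOf_eq]
      tauto⟩
  · rintro U₁ ⟨⟨hU₁k, hHU₁⟩, hU₁nT⟩ U₂ ⟨⟨hU₂k, hU₂B⟩, hU₂nS⟩
      ⟨hne, p, ⟨H', B', hH', hB', hH'B', rfl⟩, ⟨h1H, h1B, _⟩, ⟨h2H, h2B, _⟩⟩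
    have hnU₁B : ¬ U₁ ≤ B := fun h => hU₁nT ⟨hU₁k, h⟩
    have hnHU₂ : ¬ H ≤ U₂ := fun h => hU₂nS ⟨hU₂k, h⟩
    -- U₁ ⊓ B = H
    have hlt : U₁ ⊓ B < U₁ :=
      lt_of_le_of_ne inf_le_left (fun h => hnU₁B (by rw [← h]; exact inf_le_right))
    have h1 : Module.finrank K ↥(U₁ ⊓ B) < k := by
      have := Submodule.finrank_lt_finrank_of_lt hlt; omega
    have h2 : k - 1 ≤ Module.finrank K ↥(U₁ ⊓ B) := by
      have := Submodule.finrank_mono (le_inf hHU₁ hHB); omega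
    have hHeq : H = U₁ ⊓ B :=
      Submodule.eq_of_le_of_finrank_eq (le_inf hHU₁ hHB) (by omega)
    -- U₁ ⊔ U₂ has rank exactly k+1, so U₁ ⊓ U₂ has rank k-1
    have hlt2 : U₁ < U₁ ⊔ U₂ := by
      refine lt_of_le_of_ne le_sup_left (fun h => ?_)
      have h2le : U₂ ≤ U₁ := by rw [h]; exact le_sup_right
      exact hne (Submodule.eq_of_le_of_finrank_eq h2le (by omega)).symm
    have hsupk : k + 1 ≤ Module.finrank K ↥(U₁ ⊔ U₂) := by
      have := Submodule.finrank_lt_finrank_of_lt hlt2; omega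
    have hsuple : Module.finrank K ↥(U₁ ⊔ U₂) ≤ k + 1 := by
      have := Submodule.finrank_mono (sup_le h1B h2B); omega
    have hsum := Submodule.finrank_sup_add_finrank_inf_eq U₁ U₂
    have hH'eq : H' = U₁ ⊓ U₂ :=
      Submodule.eq_of_le_of_finrank_eq (le_inf h1H h2H) (by omega)
    have hH'leH : H' ≤ H := by
      rw [hH'eq, hHeq]
      exact le_inf inf_le_left (inf_le_right.trans hU₂B)
    have hfin : Module.finrank K ↥(U₁ ⊓ U₂) = k - 1 := by omega
    have : H' = H := Submodule.eq_of_le_of_finrank_eq hH'leH (by rw [hH', hH])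
    exact hnHU₂ (this ▸ h2H)
end
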